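/- arXiv:2012.00427 — 2 statements merged into one kernel-verified Lean document; each statement's English description precedes it below -/
import Mathlib

section
/- Let (Z, μ) be a finite measure space and G : Z × Z → ℝ≥0 a measurable kernel such that ∫∫_{Z×Z} exp(ε₀·G(ξ,η)) dμ(ξ) dμ(η) < ∞ for some ε₀ > 0. Let φ : Z → ℂ be a bounded measurable function with ∫_Z φ dμ = 0, and suppose there is ε₁ > 0 such that for every ε with 0 < ε < ε₁ the number ∫∫_{Z×Z} φ(ξ)·conj(φ(η))·exp(ε·G(ξ,η)) dμ(ξ) dμ(η) is a nonnegative real number. Then ∫∫_{Z×Z} φ(ξ)·conj(φ(η))·G(ξ,η) dμ(ξ) dμ(η) is a nonnegative real number. -/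
open MeasureTheory Filter
open scoped ENNReal NNReal

open Set Topology
open scoped ComplexOrder

/-!
Write `Φ(ξ, η) = φ(ξ) φ̄(η)` and `f(ε) = ∫∫ Φ exp (ε G)`. Differentiating under the integral
(for `ε < ε₀ / 2` the derivative `Φ G exp (ε G)` is dominated by `(2 / ε₀) ‖Φ‖ exp (ε₀ G)`) gives
`f'(0) = ∫∫ Φ G`. The mean-zero hypothesis says `f(0) = |∫ φ|² = 0`, so the right difference
quotients `f(ε) / ε` lie in the closed cone `[0, ∞) ⊆ ℂ`, and so does their limit `f'(0)`.
-/

theorem HasDerivWithinAt.nonneg_of_eventually_le {E : Type*} [NormedAddCommGroup E]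
    [NormedSpace ℝ E] [PartialOrder E] [IsOrderedAddMonoid E] [OrderClosedTopology E]
    [PosSMulMono ℝ E] {f : ℝ → E} {f' : E} {x : ℝ} (hf : HasDerivWithinAt f f' (Ioi x) x)
    (hle : ∀ᶠ y in 𝓝[>] x, f x ≤ f y) : 0 ≤ f' := by
  refine ge_of_tendsto ((hasDerivWithinAt_iff_tendsto_slope' self_notMem_Ioi).mp hf) ?_
  filter_upwards [hle, self_mem_nhdsWithin] with y hfy hxy
  rw [slope_def_module]
  exact smul_nonneg (inv_nonneg.mpr (sub_nonneg.mpr (le_of_lt hxy))) (sub_nonneg.mpr hfy)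

theorem Real.mul_exp_mul_le {x a ε : ℝ} (hx : 0 ≤ x) (ha : 0 < a) (hε : ε ≤ a / 2) :
    x * Real.exp (ε * x) ≤ 2 / a * Real.exp (a * x) := by
  have hx_le : x ≤ 2 / a * Real.exp (a / 2 * x) := by
    rw [div_mul_eq_mul_div, le_div_iff₀ ha]
    nlinarith [Real.add_one_le_exp (a / 2 * x)]
  calc x * Real.exp (ε * x)
      ≤ 2 / a * Real.exp (a / 2 * x) * Real.exp (a / 2 * x) := by
        gcongr
    _ = 2 / a * Real.exp (a * x) := by
        rw [mul_assoc, ← Real.exp_add, ← add_mul, add_halves]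

theorem hasDerivAt_integral_mul_exp {α : Type*} [MeasurableSpace α] {μ : Measure α}
    {Φ : α → ℂ} {C : ℝ} (hΦ : AEStronglyMeasurable Φ μ) (hΦC : ∀ᵐ p ∂μ, ‖Φ p‖ ≤ C)
    {G : α → ℝ≥0} (hG : Measurable G) {a : ℝ} (ha : 0 < a)
    (hint : Integrable (fun p => Real.exp (a * (G p : ℝ))) μ) :
    HasDerivAt (fun ε : ℝ => ∫ p, Φ p * ((Real.exp (ε * (G p : ℝ)) : ℝ) : ℂ) ∂μ)
      (∫ p, Φ p * ((G p : ℝ) : ℂ) ∂μ) 0 := by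
  have hF_meas : ∀ ε : ℝ,
      AEStronglyMeasurable (fun p => Φ p * ((Real.exp (ε * (G p : ℝ)) : ℝ) : ℂ)) μ :=
    fun ε => hΦ.mul (by fun_prop : Measurable _).aestronglyMeasurable
  have hF_int : Integrable (fun p => Φ p * ((Real.exp (0 * (G p : ℝ)) : ℝ) : ℂ)) μ := by
    refine (hint.const_mul C).mono' (hF_meas 0) ?_
    filter_upwards [hΦC] with p hp
    simpa using hp.trans (le_mul_of_one_le_right ((norm_nonneg _).trans hp)
      (Real.one_le_exp (by positivity)))
  have h_bound : ∀ᵐ p ∂μ, ∀ ε ∈ Iio (a / 2),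
      ‖Φ p * (((G p : ℝ) * Real.exp (ε * (G p : ℝ)) : ℝ) : ℂ)‖
        ≤ C * (2 / a * Real.exp (a * (G p : ℝ))) := by
    filter_upwards [hΦC] with p hp ε hε
    rw [norm_mul, Complex.norm_real, Real.norm_of_nonneg (by positivity)]
    exact mul_le_mul hp (Real.mul_exp_mul_le (G p).coe_nonneg ha hε.le) (by positivity)
      ((norm_nonneg _).trans hp)
  have h_diff : ∀ p, ∀ ε ∈ Iio (a / 2),
      HasDerivAt (fun ε : ℝ => Φ p * ((Real.exp (ε * (G p : ℝ)) : ℝ) : ℂ))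
        (Φ p * (((G p : ℝ) * Real.exp (ε * (G p : ℝ)) : ℝ) : ℂ)) ε := by
    intro p ε _
    refine ((hasDerivAt_mul_const (G p : ℝ)).exp.ofReal_comp.const_mul (Φ p)).congr_deriv ?_
    push_cast
    ring
  have key := hasDerivAt_integral_of_dominated_loc_of_deriv_le (Iio_mem_nhds (half_pos ha))
    (Eventually.of_forall hF_meas) hF_int (by fun_prop) h_bound
    ((hint.const_mul _).const_mul _) (ae_of_all _ h_diff)
  simpa using key.2

/-- If `exp (ε₀ G)` is integrable on `Z × Z` for some `ε₀ > 0`, `φ` is a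
bounded measurable mean-zero function, and the quadratic quantities
`∫∫ φ(ξ) φ̄(η) exp (ε G(ξ,η))` are nonnegative reals for all small `ε > 0`, then
`∫∫ φ(ξ) φ̄(η) G(ξ,η)` is a nonnegative real number. -/
theorem stmt3 {Z : Type*} [MeasurableSpace Z]
    (μ : Measure Z) [IsFiniteMeasure μ]
    (G : Z × Z → ℝ≥0) (hG : Measurable G)
    (ε₀ : ℝ) (hε₀ : 0 < ε₀)
    (hint : Integrable (fun p : Z × Z => Real.exp (ε₀ * (G p : ℝ))) (μ.prod μ))
    (φ : Z → ℂ) (hφ : Measurable φ) (hbd : ∃ M : ℝ, ∀ z : Z, ‖φ z‖ ≤ M)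
    (hmean : ∫ z : Z, φ z ∂μ = 0)
    (ε₁ : ℝ) (hε₁ : 0 < ε₁)
    (hpos : ∀ ε : ℝ, 0 < ε → ε < ε₁ → ∃ r : ℝ, 0 ≤ r ∧
      ∫ p : Z × Z, φ p.1 * (starRingEnd ℂ) (φ p.2) *
        ((Real.exp (ε * (G p : ℝ)) : ℝ) : ℂ) ∂(μ.prod μ) = (r : ℂ)) :
    ∃ r : ℝ, 0 ≤ r ∧
      ∫ p : Z × Z, φ p.1 * (starRingEnd ℂ) (φ p.2) * ((G p : ℝ) : ℂ) ∂(μ.prod μ) = (r : ℂ) := by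
  obtain ⟨M, hM⟩ := hbd
  have hΦ_bdd : ∀ᵐ p ∂μ.prod μ, ‖φ p.1 * (starRingEnd ℂ) (φ p.2)‖ ≤ M * M :=
    ae_of_all _ fun p => by
      rw [norm_mul, Complex.norm_conj]
      exact mul_le_mul (hM p.1) (hM p.2) (norm_nonneg _) ((norm_nonneg _).trans (hM p.1))
  have hderiv := hasDerivAt_integral_mul_exp
    (by fun_prop : Measurable fun p : Z × Z => φ p.1 * (starRingEnd ℂ) (φ p.2)).aestronglyMeasurable
    hΦ_bdd hG hε₀ hint
  have hzero : ∫ p : Z × Z, φ p.1 * (starRingEnd ℂ) (φ p.2) *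
      ((Real.exp (0 * (G p : ℝ)) : ℝ) : ℂ) ∂(μ.prod μ) = 0 := by
    simp only [zero_mul, Real.exp_zero, Complex.ofReal_one, mul_one]
    rw [integral_prod_mul φ (fun z => (starRingEnd ℂ) (φ z))]
    rw [integral_conj, hmean, zero_mul]
  have hnonneg : ∀ᶠ ε in 𝓝[>] 0, (0 : ℂ) ≤ ∫ p : Z × Z, φ p.1 * (starRingEnd ℂ) (φ p.2) *
      ((Real.exp (ε * (G p : ℝ)) : ℝ) : ℂ) ∂(μ.prod μ) := by
    filter_upwards [Ioo_mem_nhdsGT hε₁] with ε ⟨hε, hεε₁⟩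
    obtain ⟨r, hr, hI⟩ := hpos ε hε hεε₁
    exact hI ▸ Complex.zero_le_real.mpr hr
  obtain ⟨r, hr, hI⟩ := RCLike.nonneg_iff_exists_ofReal.mp
    (hderiv.hasDerivWithinAt.nonneg_of_eventually_le (by rwa [hzero]))
  exact ⟨r, hr, hI.symm⟩
end

section
/- Let G be a group, H a complex Hilbert space, and π a unitary representation of G on H, i.e. a group homomorphism from G to the group of linear isometric equivalences of H. Let b : G → H satisfy the cocycle identity b(gh) = π(g)·b(h) + b(g) for all g, h ∈ G. Let S ⊆ G be a finite subset closed under inversion and β : G → ℝ a nonnegative function supported in S with β(g⁻¹) = β(g) for all g. Then for every w ∈ H, ∑_{g ∈ S} β(g)·⟪b(g), w − π(g)w⟫ = 2·⟪∑_{g ∈ S} β(g)·b(g), w⟫. -/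
open scoped ComplexInnerProductSpace

/- Since `b e = 0`, the cocycle identity at `(g⁻¹, g)` gives `b g⁻¹ = -π(g⁻¹) b g`, and `π(g⁻¹)` is
unitary, so `⟪b g, π g w⟫ = -⟪b g⁻¹, w⟫`. The left-hand side is therefore
`∑ β g ⟪b g, w⟫ + ∑ β g ⟪b g⁻¹, w⟫`, and the substitution `g ↦ g⁻¹`, which preserves `S` and `β`,
turns the second sum into the first. -/

theorem Finset.sum_comp_inv_of_inv_mem {G M : Type*} [InvolutiveInv G] [AddCommMonoid M]
    {S : Finset G} (hS : ∀ g ∈ S, g⁻¹ ∈ S) (f : G → M) :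
    ∑ g ∈ S, f g⁻¹ = ∑ g ∈ S, f g :=
  Finset.sum_nbij' (·⁻¹) (·⁻¹) hS hS (fun g _ => inv_inv g) (fun g _ => inv_inv g)
    (fun _ _ => rfl)

def IsCocycle {G R E : Type*} [Group G] [Semiring R] [SeminormedAddCommGroup E] [Module R E]
    (π : G →* (E ≃ₗᵢ[R] E)) (b : G → E) : Prop :=
  ∀ g h : G, b (g * h) = π g (b h) + b g

namespace IsCocycle

section Module

variable {G R E : Type*} [Group G] [Semiring R] [SeminormedAddCommGroup E] [Module R E]
  {π : G →* (E ≃ₗᵢ[R] E)} {b : G → E}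

theorem map_one (hb : IsCocycle π b) : b 1 = 0 := by
  have h := hb 1 1
  rw [one_mul, _root_.map_one, LinearIsometryEquiv.coe_one, id_eq] at h
  exact add_eq_left.mp h.symm

theorem map_inv (hb : IsCocycle π b) (g : G) : b g⁻¹ = -π g⁻¹ (b g) := by
  have h := hb g⁻¹ g
  rw [inv_mul_cancel, hb.map_one] at h
  exact eq_neg_of_add_eq_zero_right h.symm

end Module

theorem inner_map_apply_right {G 𝕜 E : Type*} [Group G] [RCLike 𝕜] [NormedAddCommGroup E]
    [InnerProductSpace 𝕜 E] {π : G →* (E ≃ₗᵢ[𝕜] E)} {b : G → E} (hb : IsCocycle π b)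
    (g : G) (w : E) : inner 𝕜 (b g) (π g w) = -inner 𝕜 (b g⁻¹) w := by
  have hπ : π g⁻¹ (π g w) = w := by
    rw [_root_.map_inv, LinearIsometryEquiv.coe_inv, LinearIsometryEquiv.symm_apply_apply]
  rw [hb.map_inv, inner_neg_left, neg_neg, ← hπ, LinearIsometryEquiv.inner_map_map, hπ]

end IsCocycle

theorem stmt5_general {G : Type*} [Group G]
    {H : Type*} [NormedAddCommGroup H] [InnerProductSpace ℂ H]
    (π : G →* (H ≃ₗᵢ[ℂ] H))
    (b : G → H) (hb : ∀ g h : G, b (g * h) = π g (b h) + b g)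
    (S : Finset G) (hSinv : ∀ g ∈ S, g⁻¹ ∈ S)
    (β : G → ℝ)
    (hβsymm : ∀ g : G, β g⁻¹ = β g)
    (w : H) :
    ∑ g ∈ S, (β g : ℂ) * ⟪b g, w - π g w⟫ = 2 * ⟪(∑ g ∈ S, β g • b g), w⟫ := by
  have hcocycle : IsCocycle π b := hb
  have hreindex : ∑ g ∈ S, (β g : ℂ) * ⟪b g⁻¹, w⟫ = ∑ g ∈ S, (β g : ℂ) * ⟪b g, w⟫ := by
    simpa only [hβsymm, inv_inv] using
      (Finset.sum_comp_inv_of_inv_mem hSinv fun g => (β g⁻¹ : ℂ) * ⟪b g⁻¹, w⟫).symm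
  calc ∑ g ∈ S, (β g : ℂ) * ⟪b g, w - π g w⟫
      = ∑ g ∈ S, (β g : ℂ) * ⟪b g, w⟫ + ∑ g ∈ S, (β g : ℂ) * ⟪b g⁻¹, w⟫ := by
        rw [← Finset.sum_add_distrib]
        refine Finset.sum_congr rfl fun g _ => ?_
        rw [inner_sub_right, hcocycle.inner_map_apply_right]
        ring
    _ = 2 * ∑ g ∈ S, (β g : ℂ) * ⟪b g, w⟫ := by rw [hreindex, two_mul]
    _ = 2 * ⟪(∑ g ∈ S, β g • b g), w⟫ := by
        simp only [sum_inner, ← Complex.coe_smul, inner_smul_left, Complex.conj_ofReal]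

/-- For a unitary representation `π` of a group `G` on a complex Hilbert
space `H`, a cocycle `b : G → H`, and a nonnegative symmetric finitely supported weight
`β`, one has `∑_{g ∈ S} β g ⟪b g, w − π g w⟫ = 2 ⟪∑_{g ∈ S} β g • b g, w⟫`. -/
theorem stmt5 {G : Type*} [Group G]
    {H : Type*} [NormedAddCommGroup H] [InnerProductSpace ℂ H] [CompleteSpace H]
    (π : G →* (H ≃ₗᵢ[ℂ] H))
    (b : G → H) (hb : ∀ g h : G, b (g * h) = π g (b h) + b g)
    (S : Finset G) (hSinv : ∀ g ∈ S, g⁻¹ ∈ S)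
    (β : G → ℝ) (hβ0 : ∀ g : G, 0 ≤ β g)
    (hβsupp : ∀ g : G, β g ≠ 0 → g ∈ S)
    (hβsymm : ∀ g : G, β g⁻¹ = β g)
    (w : H) :
    ∑ g ∈ S, (β g : ℂ) * ⟪b g, w - π g w⟫ = 2 * ⟪(∑ g ∈ S, β g • b g), w⟫ :=
  stmt5_general π b hb S hSinv β hβsymm w
end
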